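/- Let K = ⊕_{n≥0} K(n) be a graded Hopf algebra over a field k with K(0) = k. Then: (I) if K is generated as an algebra in degree one (by K(1)), then K is cocommutative; (II) if K is coradically graded, then K is commutative. -/

import Mathlib

open scoped TensorProduct ENNReal

/-- Gelfand–Kirillov dimension of a `k`-algebra `A`. -/
noncomputable def gkDim (k A : Type*) [Field k] [Ring A] [Algebra k A] : ℝ≥0∞ :=
  ⨆ (V : Submodule k A) (_ : (1 : A) ∈ V) (_ : FiniteDimensional k V),
    Filter.limsup
      (fun n : ℕ => ENNReal.ofReal
        (Real.log (Module.finrank k ↥(V ^ n)) / Real.log n)) Filter.atTop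

/-- A submodule is a subcoalgebra if comultiplication maps it into its (image) tensor square. -/
def IsSubcoalgebra (k : Type*) {A : Type*} [CommSemiring k] [AddCommMonoid A] [Module k A]
    [Coalgebra k A] (C : Submodule k A) : Prop :=
  ∀ x ∈ C, Coalgebra.comul (R := k) x ∈
    LinearMap.range (TensorProduct.map C.subtype C.subtype)

/-- The coradical: the sum of all simple subcoalgebras. -/
noncomputable def coradical (k A : Type*) [CommSemiring k] [AddCommMonoid A] [Module k A]
    [Coalgebra k A] : Submodule k A :=
  sSup {S | IsSubcoalgebra k S ∧ S ≠ ⊥ ∧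
    ∀ T ≤ S, IsSubcoalgebra k T → T = ⊥ ∨ T = S}

/-- The image of `C ⊗ D` inside `A ⊗ A`. -/
noncomputable def tensorSubmodule (k : Type*) {A : Type*} [CommSemiring k] [AddCommMonoid A]
    [Module k A] (C D : Submodule k A) : Submodule k (A ⊗[k] A) :=
  LinearMap.range (TensorProduct.map C.subtype D.subtype)

/-- The coradical filtration `C_n = Δ⁻¹(A ⊗ C_{n-1} + C_0 ⊗ A)`. -/
noncomputable def coradFilt (k : Type*) (A : Type*) [CommSemiring k] [AddCommMonoid A]
    [Module k A] [Coalgebra k A] : ℕ → Submodule k A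
  | 0 => coradical k A
  | (n + 1) => Submodule.comap (Coalgebra.comul : A →ₗ[k] A ⊗[k] A)
      (tensorSubmodule k ⊤ (coradFilt k A n) ⊔ tensorSubmodule k (coradical k A) ⊤)

/-- Group-like elements. -/
def IsGrpLike (k : Type*) {A : Type*} [CommSemiring k] [AddCommMonoid A] [Module k A]
    [Coalgebra k A] (g : A) : Prop :=
  Coalgebra.counit (R := k) g = 1 ∧ Coalgebra.comul (R := k) g = g ⊗ₜ[k] g

/-- A coalgebra is pointed if its coradical is spanned by the group-like elements. -/
def IsPointedCoalg (k A : Type*) [CommSemiring k] [AddCommMonoid A] [Module k A]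
    [Coalgebra k A] : Prop :=
  coradical k A = Submodule.span k {g : A | IsGrpLike k g}

/-- A Hopf algebra is connected if its coradical is `k·1`. -/
def IsConnectedHopf (k A : Type*) [CommSemiring k] [Semiring A] [Module k A] [Algebra k A]
    [Coalgebra k A] : Prop :=
  coradical k A = Submodule.span k {(1 : A)}

/-- The space of primitive elements of a bialgebra. -/
noncomputable def primitives (k A : Type*) [CommRing k] [Ring A] [Module k A]
    [Coalgebra k A] : Submodule k A :=
  LinearMap.ker ((Coalgebra.comul : A →ₗ[k] A ⊗[k] A) -
    ((TensorProduct.mk k A A).flip 1 + TensorProduct.mk k A A 1))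

/-- The span of products of at most `n` (and at least one) elements of `W`. -/
noncomputable def subPow (k : Type*) {A : Type*} [CommSemiring k] [Semiring A] [Algebra k A]
    (W : Submodule k A) (n : ℕ) : Submodule k A :=
  ⨆ i ∈ Finset.Icc 1 n, W ^ i

/-- A Hopf subalgebra: a subalgebra which is also a subcoalgebra and is stable under
the antipode. -/
def IsHopfSubalgebra (k : Type*) {H : Type*} [CommSemiring k] [Semiring H] [HopfAlgebra k H]
    (B : Subalgebra k H) : Prop :=
  (∀ x ∈ B, Coalgebra.comul (R := k) x ∈
      LinearMap.range (TensorProduct.map B.toSubmodule.subtype B.toSubmodule.subtype)) ∧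
  (∀ x ∈ B, HopfAlgebra.antipode (R := k) x ∈ B)

/-- `F (n-1)` with the convention `F (-1) = ⊥`. -/
def filtPred {k A : Type*} [CommSemiring k] [AddCommMonoid A] [Module k A]
    (F : ℕ → Submodule k A) : ℕ → Submodule k A
  | 0 => ⊥
  | (n + 1) => F n

/-- The `n`-th graded piece `F n / F (n-1)` of a filtration. -/
abbrev filtPiece {k A : Type*} [Field k] [AddCommGroup A] [Module k A]
    (F : ℕ → Submodule k A) (n : ℕ) :=
  ↥(F n) ⧸ Submodule.comap (F n).subtype (filtPred F n)


/-!
For homogeneous `x` of degree `n > 0`, `Δx = x ⊗ 1 + 1 ⊗ x + r` with `r` in the sum of the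
`K(i) ⊗ K(n - i)`, `0 < i < n`: since `K(0) = k`, applying `ε ⊗ id` and `id ⊗ ε` to the
components of `Δx` identifies the two outer ones.

(I) Hence `K(1)` consists of primitive elements; primitive elements have cocommutative
coproduct, and the elements with cocommutative coproduct form a subalgebra.

(II) Homogeneous `x ∈ K(m)`, `y ∈ K(n)` commute, by induction on `m + n`: in `Δ(xy - yx)` all
cross terms are commutators of tensors whose factors have smaller total degree, so `xy - yx` is
primitive, hence lies in `C_1 = K(0) ⊕ K(1)`; being homogeneous of degree `m + n ≥ 2`, it is
zero.
-/

section TensorSubmodule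

variable {k A : Type*} [CommSemiring k] [AddCommMonoid A] [Module k A]

lemma tmul_mem_tensorSubmodule {C D : Submodule k A} {a b : A} (ha : a ∈ C) (hb : b ∈ D) :
    a ⊗ₜ[k] b ∈ tensorSubmodule k C D :=
  ⟨(⟨a, ha⟩ : C) ⊗ₜ[k] (⟨b, hb⟩ : D), rfl⟩

@[elab_as_elim]
lemma tensorSubmodule_induction {C D : Submodule k A} {motive : A ⊗[k] A → Prop}
    {w : A ⊗[k] A} (hw : w ∈ tensorSubmodule k C D)
    (tmul : ∀ a ∈ C, ∀ b ∈ D, motive (a ⊗ₜ[k] b)) (zero : motive 0)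
    (add : ∀ u v, motive u → motive v → motive (u + v)) : motive w := by
  obtain ⟨t, rfl⟩ := hw
  induction t using TensorProduct.induction_on with
  | zero => simpa using zero
  | tmul a b => simpa using tmul a a.2 b b.2
  | add u v hu hv => simpa using add _ _ hu hv

lemma tensorSubmodule_le {C D : Submodule k A} {P : Submodule k (A ⊗[k] A)}
    (h : ∀ a ∈ C, ∀ b ∈ D, a ⊗ₜ[k] b ∈ P) : tensorSubmodule k C D ≤ P :=
  fun _ hw => tensorSubmodule_induction hw h P.zero_mem fun _ _ => P.add_mem

lemma tensorSubmodule_mono {C C' D D' : Submodule k A} (hC : C ≤ C') (hD : D ≤ D') :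
    tensorSubmodule k C D ≤ tensorSubmodule k C' D' :=
  tensorSubmodule_le fun _ ha _ hb => tmul_mem_tensorSubmodule (hC ha) (hD hb)

end TensorSubmodule

section Counit

variable {k A : Type*} [CommSemiring k] [AddCommMonoid A] [Module k A] [Coalgebra k A]

variable (k A) in
noncomputable def counitLeft : A ⊗[k] A →ₗ[k] A :=
  (TensorProduct.lid k A).toLinearMap ∘ₗ (Coalgebra.counit (R := k) (A := A)).rTensor A

variable (k A) in
noncomputable def counitRight : A ⊗[k] A →ₗ[k] A :=
  (TensorProduct.rid k A).toLinearMap ∘ₗ (Coalgebra.counit (R := k) (A := A)).lTensor A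

@[simp]
lemma counitLeft_tmul (a b : A) :
    counitLeft k A (a ⊗ₜ[k] b) = Coalgebra.counit (R := k) a • b := by
  simp [counitLeft]

@[simp]
lemma counitRight_tmul (a b : A) :
    counitRight k A (a ⊗ₜ[k] b) = Coalgebra.counit (R := k) b • a := by
  simp [counitRight]

@[simp]
lemma counitLeft_comul (a : A) : counitLeft k A (Coalgebra.comul a) = a := by
  simp [counitLeft, Coalgebra.rTensor_counit_comul]

@[simp]
lemma counitRight_comul (a : A) : counitRight k A (Coalgebra.comul a) = a := by
  simp [counitRight, Coalgebra.lTensor_counit_comul]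

lemma counitLeft_mem {C D : Submodule k A} {w : A ⊗[k] A} (hw : w ∈ tensorSubmodule k C D) :
    counitLeft k A w ∈ D :=
  tensorSubmodule_le (P := D.comap (counitLeft k A))
    (fun _ _ _ hb => by simpa using D.smul_mem _ hb) hw

lemma counitRight_mem {C D : Submodule k A} {w : A ⊗[k] A} (hw : w ∈ tensorSubmodule k C D) :
    counitRight k A w ∈ C :=
  tensorSubmodule_le (P := C.comap (counitRight k A))
    (fun _ ha _ _ => by simpa using C.smul_mem _ ha) hw

end Counit

section Bialgebra

variable {k A : Type*} [CommSemiring k] [Semiring A] [Bialgebra k A]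

lemma eq_one_tmul_of_mem_tensorSubmodule {D : Submodule k A} {w : A ⊗[k] A}
    (hw : w ∈ tensorSubmodule k (Submodule.span k {1}) D) :
    w = 1 ⊗ₜ[k] counitLeft k A w := by
  refine tensorSubmodule_le (P := LinearMap.eqLocus LinearMap.id
    (TensorProduct.mk k A A 1 ∘ₗ counitLeft k A)) (fun a ha b _ => ?_) hw
  obtain ⟨c, rfl⟩ := Submodule.mem_span_singleton.1 ha
  simp [TensorProduct.smul_tmul]

lemma eq_tmul_one_of_mem_tensorSubmodule {C : Submodule k A} {w : A ⊗[k] A}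
    (hw : w ∈ tensorSubmodule k C (Submodule.span k {1})) :
    w = counitRight k A w ⊗ₜ[k] 1 := by
  refine tensorSubmodule_le (P := LinearMap.eqLocus LinearMap.id
    ((TensorProduct.mk k A A).flip 1 ∘ₗ counitRight k A)) (fun a _ b hb => ?_) hw
  obtain ⟨c, rfl⟩ := Submodule.mem_span_singleton.1 hb
  simp [TensorProduct.smul_tmul']

end Bialgebra

section Commute

variable {k A : Type*} [CommSemiring k] [Semiring A] [Algebra k A]

lemma commute_of_mem_iSup {ι : Sort*} {p : ι → Submodule k A} {u v : A}
    (hu : u ∈ ⨆ i, p i) (h : ∀ i, ∀ w ∈ p i, Commute w v) : Commute u v :=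
  Submodule.iSup_induction p (motive := fun w => Commute w v) hu h (Commute.zero_left v)
    fun _ _ => Commute.add_left

lemma commute_of_mem_tensorSubmodule {C D C' D' : Submodule k A}
    (hC : ∀ a ∈ C, ∀ a' ∈ C', Commute a a') (hD : ∀ b ∈ D, ∀ b' ∈ D', Commute b b')
    {u v : A ⊗[k] A} (hu : u ∈ tensorSubmodule k C D) (hv : v ∈ tensorSubmodule k C' D') :
    Commute u v :=
  tensorSubmodule_induction (motive := fun w => Commute w v) hu
    (fun a ha b hb => tensorSubmodule_induction (motive := fun w => Commute (a ⊗ₜ b) w) hv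
      (fun a' ha' b' hb' => (hC a ha a' ha').tmul (hD b hb b' hb'))
      (Commute.zero_right _) fun _ _ => Commute.add_right)
    (Commute.zero_left v) fun _ _ => Commute.add_left

lemma commute_of_mem_span_one {a : A} (ha : a ∈ Submodule.span k {1}) (b : A) :
    Commute a b := by
  obtain ⟨c, rfl⟩ := Submodule.mem_span_singleton.1 ha
  exact (Commute.one_left b).smul_left c

end Commute

lemma commutator_add_add_eq_of_commute {R : Type*} [Ring R] {a₁ a₂ a₃ b₁ b₂ b₃ : R}
    (h₁₂ : Commute a₁ b₂) (h₁₃ : Commute a₁ b₃) (h₂₁ : Commute a₂ b₁) (h₂₃ : Commute a₂ b₃)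
    (h₃₁ : Commute a₃ b₁) (h₃₂ : Commute a₃ b₂) (h₃₃ : Commute a₃ b₃) :
    (a₁ + a₂ + a₃) * (b₁ + b₂ + b₃) - (b₁ + b₂ + b₃) * (a₁ + a₂ + a₃) =
      (a₁ * b₁ - b₁ * a₁) + (a₂ * b₂ - b₂ * a₂) := by
  simp only [add_mul, mul_add, h₁₂.eq, h₁₃.eq, h₂₁.eq, h₂₃.eq, h₃₁.eq, h₃₂.eq, h₃₃.eq]
  abel

section Primitives

variable {k A : Type*} [CommRing k] [Ring A] [Bialgebra k A]

lemma mem_primitives_iff {z : A} :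
    z ∈ primitives k A ↔ Coalgebra.comul (R := k) z = z ⊗ₜ[k] 1 + 1 ⊗ₜ[k] z := by
  simp [primitives, sub_eq_zero]

lemma comm_comul_of_mem_primitives {z : A} (hz : z ∈ primitives k A) :
    TensorProduct.comm k A A (Coalgebra.comul (R := k) z) = Coalgebra.comul (R := k) z := by
  rw [mem_primitives_iff.1 hz, map_add, TensorProduct.comm_tmul, TensorProduct.comm_tmul,
    add_comm]

theorem comm_comul_of_adjoin_eq_top {S : Set A} (hS : S ⊆ primitives k A)
    (hadj : Algebra.adjoin k S = ⊤) (x : A) :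
    TensorProduct.comm k A A (Coalgebra.comul (R := k) x) = Coalgebra.comul (R := k) x := by
  let cocomm : Subalgebra k A := AlgHom.equalizer
    ((Algebra.TensorProduct.comm k A A).toAlgHom.comp (Bialgebra.comulAlgHom k A))
    (Bialgebra.comulAlgHom k A)
  have hcocomm : ∀ y, y ∈ cocomm ↔
      TensorProduct.comm k A A (Coalgebra.comul (R := k) y) = Coalgebra.comul (R := k) y :=
    -- `Algebra.TensorProduct.comm` is `TensorProduct.comm` as a function
    fun _ => Iff.rfl
  have hle : Algebra.adjoin k S ≤ cocomm :=
    Algebra.adjoin_le fun z hz => (hcocomm z).2 (comm_comul_of_mem_primitives (hS hz))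
  exact (hcocomm x).1 (hle (hadj ▸ Algebra.mem_top))

lemma mem_coradFilt_one_of_mem_primitives (hone : (1 : A) ∈ coradical k A) {z : A}
    (hz : z ∈ primitives k A) : z ∈ coradFilt k A 1 := by
  show Coalgebra.comul (R := k) z ∈
    tensorSubmodule k ⊤ (coradical k A) ⊔ tensorSubmodule k (coradical k A) ⊤
  rw [mem_primitives_iff.1 hz]
  exact add_mem (Submodule.mem_sup_left (tmul_mem_tensorSubmodule trivial hone))
    (Submodule.mem_sup_right (tmul_mem_tensorSubmodule hone trivial))

end Primitives

section Decomposition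

variable {ι M σ : Type*} [DecidableEq ι] [AddCommMonoid M] [SetLike σ M]
  [AddSubmonoidClass σ M] (ℳ : ι → σ) [DirectSum.Decomposition ℳ]

lemma DirectSum.Decomposition.eq_of_sum_eq {κ : Type*} {s : Finset κ} {f : κ → M}
    {deg : κ → ι} {i₀ : κ} {n : ι} {x : M} (hf : ∀ i ∈ s, f i ∈ ℳ (deg i)) (hi₀ : i₀ ∈ s)
    (hdeg : ∀ i ∈ s, deg i = n ↔ i = i₀) (hsum : ∑ i ∈ s, f i = x) (hx : x ∈ ℳ n) :
    f i₀ = x :=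
  calc f i₀ = DirectSum.decompose ℳ (f i₀) n :=
        (DirectSum.decompose_of_mem_same ℳ ((hdeg i₀ hi₀).2 rfl ▸ hf i₀ hi₀)).symm
    _ = ∑ i ∈ s, (DirectSum.decompose ℳ (f i) n : M) :=
        (Finset.sum_eq_single i₀ (fun i hi hne => DirectSum.decompose_of_mem_ne ℳ (hf i hi)
          (mt (hdeg i hi).1 hne)) (absurd hi₀)).symm
    _ = DirectSum.decompose ℳ x n := by
        rw [← hsum, DirectSum.decompose_sum, DirectSum.sum_apply, AddSubmonoidClass.coe_finsetSum]
    _ = x := DirectSum.decompose_of_mem_same ℳ hx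

end Decomposition

lemma eq_zero_of_mem_of_mem_sup {ι R M : Type*} [DecidableEq ι] [Semiring R] [AddCommMonoid M]
    [Module R M] (ℳ : ι → Submodule R M) [DirectSum.Decomposition ℳ] {i j p : ι} {z : M}
    (hz : z ∈ ℳ p) (hij : z ∈ ℳ i ⊔ ℳ j) (hi : i ≠ p) (hj : j ≠ p) : z = 0 := by
  obtain ⟨a, ha, b, hb, rfl⟩ := Submodule.mem_sup.1 hij
  rw [← DirectSum.decompose_of_mem_same ℳ hz, DirectSum.decompose_add, DirectSum.add_apply,
    Submodule.coe_add, DirectSum.decompose_of_mem_ne ℳ ha hi,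
    DirectSum.decompose_of_mem_ne ℳ hb hj, add_zero]

lemma commute_of_forall_mem_graded {ι k A : Type*} [DecidableEq ι] [CommSemiring k] [Semiring A]
    [Algebra k A] (𝒜 : ι → Submodule k A) [DirectSum.Decomposition 𝒜]
    (h : ∀ i j, ∀ a ∈ 𝒜 i, ∀ b ∈ 𝒜 j, Commute a b) (x y : A) : Commute x y := by
  have hmem (z : A) : z ∈ ⨆ i, 𝒜 i :=
    (DirectSum.Decomposition.isInternal 𝒜).submodule_iSup_eq_top ▸ Submodule.mem_top
  exact commute_of_mem_iSup (hmem x) fun i a ha =>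
    (commute_of_mem_iSup (hmem y) fun j b hb => (h i j a ha b hb).symm).symm

section Graded

variable {k K : Type*} [CommRing k] [Ring K] [Bialgebra k K] (𝒦 : ℕ → Submodule k K)

def IsGradedComul : Prop :=
  ∀ n : ℕ, ∀ x ∈ 𝒦 n, Coalgebra.comul (R := k) x ∈
    ⨆ i ∈ Finset.range (n + 1), tensorSubmodule k (𝒦 i) (𝒦 (n - i))

def gradeLE (a : ℕ) : Submodule k K :=
  ⨆ i ≤ a, 𝒦 i

variable {𝒦}

lemma mem_gradeLE {i a : ℕ} {x : K} (hx : x ∈ 𝒦 i) (hi : i ≤ a) : x ∈ gradeLE 𝒦 a :=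
  Submodule.mem_iSup_of_mem i (Submodule.mem_iSup_of_mem hi hx)

lemma commute_of_mem_gradeLE {N a c : ℕ}
    (hN : ∀ i j, i + j ≤ N → ∀ x ∈ 𝒦 i, ∀ y ∈ 𝒦 j, Commute x y) (hac : a + c ≤ N)
    {u v : K} (hu : u ∈ gradeLE 𝒦 a) (hv : v ∈ gradeLE 𝒦 c) : Commute u v :=
  commute_of_mem_iSup hu fun i _ hw => commute_of_mem_iSup hw fun hi w hw =>
    (commute_of_mem_iSup hv fun j _ hw' => commute_of_mem_iSup hw' fun hj w' hw' =>
      (hN i j (by omega) w hw w' hw').symm).symm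

lemma commute_of_mem_tensorSubmodule_gradeLE {N a b c d : ℕ}
    (hN : ∀ i j, i + j ≤ N → ∀ x ∈ 𝒦 i, ∀ y ∈ 𝒦 j, Commute x y)
    (hac : a + c ≤ N) (hbd : b + d ≤ N) {u v : K ⊗[k] K}
    (hu : u ∈ tensorSubmodule k (gradeLE 𝒦 a) (gradeLE 𝒦 b))
    (hv : v ∈ tensorSubmodule k (gradeLE 𝒦 c) (gradeLE 𝒦 d)) : Commute u v :=
  commute_of_mem_tensorSubmodule (fun _ hx _ hy => commute_of_mem_gradeLE hN hac hx hy)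
    (fun _ hx _ hy => commute_of_mem_gradeLE hN hbd hx hy) hu hv

variable [GradedAlgebra 𝒦]

theorem comul_sub_mem_of_mem (hcomul : IsGradedComul 𝒦)
    (hzero : 𝒦 0 = Submodule.span k {1}) {n : ℕ} (hn : 0 < n) {x : K} (hx : x ∈ 𝒦 n) :
    Coalgebra.comul (R := k) x - x ⊗ₜ[k] 1 - 1 ⊗ₜ[k] x ∈
      ⨆ i ∈ Finset.Ioo 0 n, tensorSubmodule k (𝒦 i) (𝒦 (n - i)) := by
  obtain ⟨μ, hμ⟩ := (Submodule.mem_iSup_finset_iff_exists_sum _ _).1 (hcomul n x hx)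
  have hleft : (μ 0 : K ⊗[k] K) = 1 ⊗ₜ[k] x := by
    have hμ0 : (μ 0 : K ⊗[k] K) ∈ tensorSubmodule k (Submodule.span k {1}) (𝒦 n) :=
      hzero ▸ (μ 0).2
    have hx0 : counitLeft k K (μ 0) = x :=
      DirectSum.Decomposition.eq_of_sum_eq 𝒦 (f := fun i => counitLeft k K (μ i))
        (fun i _ => counitLeft_mem (μ i).2) (Finset.mem_range.2 n.succ_pos)
        (fun i hi => by rw [Finset.mem_range] at hi; omega)
        (by rw [← map_sum, hμ, counitLeft_comul]) hx
    rw [eq_one_tmul_of_mem_tensorSubmodule hμ0, hx0]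
  have hright : (μ n : K ⊗[k] K) = x ⊗ₜ[k] 1 := by
    have hμn : (μ n : K ⊗[k] K) ∈ tensorSubmodule k (𝒦 n) (Submodule.span k {1}) := by
      simpa only [Nat.sub_self, hzero] using (μ n).2
    have hxn : counitRight k K (μ n) = x :=
      DirectSum.Decomposition.eq_of_sum_eq 𝒦 (f := fun i => counitRight k K (μ i))
        (fun i _ => counitRight_mem (μ i).2) (Finset.self_mem_range_succ n)
        (fun i _ => Iff.rfl) (by rw [← map_sum, hμ, counitRight_comul]) hx
    rw [eq_tmul_one_of_mem_tensorSubmodule hμn, hxn]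
  have hsplit : Finset.range (n + 1) = insert 0 (insert n (Finset.Ioo 0 n)) := by
    ext j
    simp only [Finset.mem_range, Finset.mem_insert, Finset.mem_Ioo]
    omega
  rw [← hμ, hsplit, Finset.sum_insert (by simp; omega), Finset.sum_insert (by simp), hleft,
    hright, show ∀ a b c : K ⊗[k] K, b + (a + c) - a - b = c by intros; abel]
  exact Submodule.sum_mem _ fun i hi =>
    Submodule.mem_iSup_of_mem i (Submodule.mem_iSup_of_mem hi (μ i).2)

lemma mem_primitives_of_mem_one (hcomul : IsGradedComul 𝒦)
    (hzero : 𝒦 0 = Submodule.span k {1}) {x : K} (hx : x ∈ 𝒦 1) : x ∈ primitives k K := by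
  have h := comul_sub_mem_of_mem hcomul hzero one_pos hx
  rw [show Finset.Ioo 0 1 = ∅ from rfl] at h
  simp only [Finset.notMem_empty, iSup_false, iSup_bot, Submodule.mem_bot] at h
  rw [mem_primitives_iff, ← sub_eq_zero, ← h]
  abel

lemma comul_sub_mem_tensorSubmodule_gradeLE (hcomul : IsGradedComul 𝒦)
    (hzero : 𝒦 0 = Submodule.span k {1}) {n : ℕ} (hn : 0 < n) {x : K} (hx : x ∈ 𝒦 n) :
    Coalgebra.comul (R := k) x - x ⊗ₜ[k] 1 - 1 ⊗ₜ[k] x ∈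
      tensorSubmodule k (gradeLE 𝒦 (n - 1)) (gradeLE 𝒦 (n - 1)) := by
  refine (show _ ≤ tensorSubmodule k _ _ from iSup₂_le fun i hi => ?_)
    (comul_sub_mem_of_mem hcomul hzero hn hx)
  rw [Finset.mem_Ioo] at hi
  exact tensorSubmodule_mono (fun _ h => mem_gradeLE h (by omega))
    (fun _ h => mem_gradeLE h (by omega))

theorem commutator_mem_primitives (hcomul : IsGradedComul 𝒦)
    (hzero : 𝒦 0 = Submodule.span k {1}) {N : ℕ}
    (hN : ∀ i j, i + j ≤ N → ∀ x ∈ 𝒦 i, ∀ y ∈ 𝒦 j, Commute x y)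
    {m n : ℕ} (hm : 0 < m) (hn : 0 < n) (hmn : m + n ≤ N + 1) {x y : K}
    (hx : x ∈ 𝒦 m) (hy : y ∈ 𝒦 n) : x * y - y * x ∈ primitives k K := by
  have hone : (1 : K) ∈ gradeLE 𝒦 0 := mem_gradeLE (SetLike.one_mem_graded 𝒦) le_rfl
  have hx₁ := tmul_mem_tensorSubmodule (k := k) (mem_gradeLE hx le_rfl) hone
  have hx₂ := tmul_mem_tensorSubmodule (k := k) hone (mem_gradeLE hx le_rfl)
  have hy₁ := tmul_mem_tensorSubmodule (k := k) (mem_gradeLE hy le_rfl) hone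
  have hy₂ := tmul_mem_tensorSubmodule (k := k) hone (mem_gradeLE hy le_rfl)
  have hr := comul_sub_mem_tensorSubmodule_gradeLE hcomul hzero hm hx
  have hs := comul_sub_mem_tensorSubmodule_gradeLE hcomul hzero hn hy
  have hc {a b c d : ℕ} (hac : a + c ≤ N) (hbd : b + d ≤ N) {u v : K ⊗[k] K}
      (hu : u ∈ tensorSubmodule k (gradeLE 𝒦 a) (gradeLE 𝒦 b))
      (hv : v ∈ tensorSubmodule k (gradeLE 𝒦 c) (gradeLE 𝒦 d)) : Commute u v :=
    commute_of_mem_tensorSubmodule_gradeLE hN hac hbd hu hv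
  have hΔ (z : K) : Coalgebra.comul (R := k) z =
      z ⊗ₜ[k] 1 + 1 ⊗ₜ[k] z + (Coalgebra.comul (R := k) z - z ⊗ₜ[k] 1 - 1 ⊗ₜ[k] z) := by
    abel
  -- Of the nine products in `ΔxΔy - ΔyΔx`, only `x ⊗ 1` against `y ⊗ 1` and `1 ⊗ x` against
  -- `1 ⊗ y` reach degree `N + 1` in one tensor factor.
  rw [mem_primitives_iff, map_sub, Bialgebra.comul_mul, Bialgebra.comul_mul, hΔ x, hΔ y,
    commutator_add_add_eq_of_commute (hc (by omega) (by omega) hx₁ hy₂)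
      (hc (by omega) (by omega) hx₁ hs) (hc (by omega) (by omega) hx₂ hy₁)
      (hc (by omega) (by omega) hx₂ hs) (hc (by omega) (by omega) hr hy₁)
      (hc (by omega) (by omega) hr hy₂) (hc (by omega) (by omega) hr hs)]
  simp only [Algebra.TensorProduct.tmul_mul_tmul, mul_one, TensorProduct.sub_tmul,
    TensorProduct.tmul_sub]

theorem commute_of_mem_of_add_le (hcomul : IsGradedComul 𝒦) (hzero : 𝒦 0 = Submodule.span k {1})
    (hcorad : coradical k K = 𝒦 0) (hfilt : coradFilt k K 1 = 𝒦 0 ⊔ 𝒦 1) (N : ℕ) :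
    ∀ i j, i + j ≤ N → ∀ x ∈ 𝒦 i, ∀ y ∈ 𝒦 j, Commute x y := by
  induction N with
  | zero =>
    intro i j hij x hx y _
    obtain rfl : i = 0 := by omega
    exact commute_of_mem_span_one (hzero ▸ hx) y
  | succ N ih =>
    intro i j hij x hx y hy
    rcases Nat.eq_zero_or_pos i with rfl | hi
    · exact commute_of_mem_span_one (hzero ▸ hx) y
    rcases Nat.eq_zero_or_pos j with rfl | hj
    · exact (commute_of_mem_span_one (hzero ▸ hy) x).symm
    have hdeg : x * y - y * x ∈ 𝒦 (i + j) :=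
      sub_mem (SetLike.mul_mem_graded hx hy) (add_comm i j ▸ SetLike.mul_mem_graded hy hx)
    have hfilt₁ : x * y - y * x ∈ 𝒦 0 ⊔ 𝒦 1 :=
      hfilt ▸ mem_coradFilt_one_of_mem_primitives (hcorad ▸ SetLike.one_mem_graded 𝒦)
        (commutator_mem_primitives hcomul hzero ih hi hj hij hx hy)
    exact sub_eq_zero.1 (eq_zero_of_mem_of_mem_sup 𝒦 hdeg hfilt₁ (by omega) (by omega))

end Graded

theorem graded_hopf_cocomm_and_comm_general (k : Type*) [Field k]
    (K : Type*) [Ring K] [HopfAlgebra k K]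
    (𝒦 : ℕ → Submodule k K) [GradedAlgebra 𝒦]
    (hgradedcomul : ∀ n : ℕ, ∀ x ∈ 𝒦 n, Coalgebra.comul (R := k) x ∈
      ⨆ i ∈ Finset.range (n + 1), tensorSubmodule k (𝒦 i) (𝒦 (n - i)))
    (hzero : 𝒦 0 = Submodule.span k {(1 : K)}) :
    ((Algebra.adjoin k (𝒦 1 : Set K) = ⊤ →
      ∀ x : K, (TensorProduct.comm k K K) (Coalgebra.comul (R := k) x) =
        Coalgebra.comul (R := k) x)) ∧
    ((coradFilt k K 0 = 𝒦 0 ∧ coradFilt k K 1 = 𝒦 0 ⊔ 𝒦 1) →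
      ∀ x y : K, x * y = y * x) := by
  refine ⟨comm_comul_of_adjoin_eq_top fun x hx => mem_primitives_of_mem_one hgradedcomul hzero hx,
    ?_⟩
  rintro ⟨hcorad, hfilt⟩ x y
  refine (commute_of_forall_mem_graded 𝒦 (fun i j => ?_) x y).eq
  exact commute_of_mem_of_add_le hgradedcomul hzero hcorad hfilt (i + j) i j le_rfl

/-- Let `K = ⊕ K(n)` be a graded Hopf algebra with `K(0) = k`.  Then
(I) if `K` is generated in degree one it is cocommutative, and (II) if `K` is coradically
graded it is commutative. -/
theorem graded_hopf_cocomm_and_comm (k : Type*) [Field k]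
    (K : Type*) [Ring K] [HopfAlgebra k K]
    (𝒦 : ℕ → Submodule k K) [GradedAlgebra 𝒦]
    (hgradedcomul : ∀ n : ℕ, ∀ x ∈ 𝒦 n, Coalgebra.comul (R := k) x ∈
      ⨆ i ∈ Finset.range (n + 1), tensorSubmodule k (𝒦 i) (𝒦 (n - i)))
    (hgradedantipode : ∀ n : ℕ, ∀ x ∈ 𝒦 n, HopfAlgebra.antipode (R := k) x ∈ 𝒦 n)
    (hzero : 𝒦 0 = Submodule.span k {(1 : K)}) :
    ((Algebra.adjoin k (𝒦 1 : Set K) = ⊤ →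
      ∀ x : K, (TensorProduct.comm k K K) (Coalgebra.comul (R := k) x) =
        Coalgebra.comul (R := k) x)) ∧
    ((coradFilt k K 0 = 𝒦 0 ∧ coradFilt k K 1 = 𝒦 0 ⊔ 𝒦 1) →
      ∀ x y : K, x * y = y * x) :=
  graded_hopf_cocomm_and_comm_general k K 𝒦 hgradedcomul hzero
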